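/- For every program M of the affine probabilistic λ-calculus, there exists exactly one value subdistribution D such that M ⇓ D, and D is finitely supported. -/
import Mathlib


noncomputable section
open Classical

/-- Terms of the affine probabilistic λ-calculus (named variables). -/
inductive Tm : Type where
  | var : ℕ → Tm
  | lam : ℕ → Tm → Tm
  | app : Tm → Tm → Tm
  | choice : Tm → Tm → Tm
  | omega : Tm
  deriving DecidableEq

/-- Capture-avoiding substitution of a closed term `V` for variable `x`. -/
def Tm.subst (x : ℕ) (V : Tm) : Tm → Tm
  | .var y => if y = x then V else .var y
  | .lam y M => if y = x then .lam y M else .lam y (Tm.subst x V M)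
  | .app M N => .app (Tm.subst x V M) (Tm.subst x V N)
  | .choice M N => .choice (Tm.subst x V M) (Tm.subst x V N)
  | .omega => .omega

/-- Values are abstractions. -/
def Tm.IsVal : Tm → Prop
  | .lam _ _ => True
  | _ => False

/-- The affine typing judgement `Γ ⊢ M`. -/
inductive Affine : Finset ℕ → Tm → Prop where
  | var {Γ : Finset ℕ} {x : ℕ} : x ∈ Γ → Affine Γ (.var x)
  | lam {Γ : Finset ℕ} {x : ℕ} {M : Tm} : Affine (insert x Γ) M → Affine Γ (.lam x M)
  | app {Γ Δ : Finset ℕ} {M N : Tm} : Disjoint Γ Δ → Affine Γ M → Affine Δ N →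
      Affine (Γ ∪ Δ) (.app M N)
  | choice {Γ : Finset ℕ} {M N : Tm} : Affine Γ M → Affine Γ N → Affine Γ (.choice M N)
  | omega {Γ : Finset ℕ} : Affine Γ .omega

/-- Finite (sub)distributions over terms. -/
abbrev TDist := Tm →₀ ℝ

/-- Big-step evaluation `M ⇓ D`. -/
inductive BigStep : Tm → TDist → Prop where
  | omega : BigStep .omega 0
  | val {x : ℕ} {M : Tm} : BigStep (.lam x M) (Finsupp.single (.lam x M) 1)
  | choice {M N : Tm} {D E : TDist} : BigStep M D → BigStep N E →
      BigStep (.choice M N) ((1 / 2 : ℝ) • D + (1 / 2 : ℝ) • E)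
  | app {M N : Tm} {D E : TDist} {F : Tm → Tm → TDist} {bv : Tm → ℕ} {bd : Tm → Tm} :
      BigStep M D → BigStep N E →
      (∀ f ∈ D.support, f = Tm.lam (bv f) (bd f)) →
      (∀ f ∈ D.support, ∀ v ∈ E.support, BigStep (Tm.subst (bv f) v (bd f)) (F f v)) →
      BigStep (.app M N) (D.sum fun f p => E.sum fun v q => (p * q) • F f v)

/-- The semantics of a term: the (unique) big-step result, if any. -/
def sem (M : Tm) : TDist := if h : ∃ D, BigStep M D then h.choose else 0

/-- Weight (total mass) of a subdistribution. -/
def wt (D : TDist) : ℝ := D.sum fun _ p => p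

/-- Probability that a term accepts a trace (a list of value arguments). -/
def Pr : List Tm → Tm → ℝ
  | [] => fun M => wt (sem M)
  | V :: s => fun M => (sem M).sum fun W p =>
      p * (match W with
           | Tm.lam x body => Pr s (Tm.subst x V body)
           | _ => 0)

/-- The trace distance. -/
def deltaTr (M N : Tm) : ℝ := ⨆ s : List Tm, |Pr s M - Pr s N|

theorem BigStep.det' {M : Tm} {D : TDist} (h : BigStep M D) :
    ∀ {E : TDist}, BigStep M E → D = E := by
  induction h with
  | omega => intro E hE; cases hE; rfl
  | val => intro E hE; cases hE; rfl
  | choice h1 h2 ih1 ih2 =>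
    intro E hE
    cases hE with
    | choice g1 g2 => rw [ih1 g1, ih2 g2]
  | app hM hN hlam hF ihM ihN ihF =>
    intro E hE
    cases hE with
    | @app _ _ D' E' F' bv' bd' hM' hN' hlam' hF' =>
      obtain rfl := ihM hM'
      obtain rfl := ihN hN'
      apply Finsupp.sum_congr
      intro f hf
      apply Finsupp.sum_congr
      intro v hv
      have e3 : Tm.lam _ _ = Tm.lam _ _ := (hlam f hf).symm.trans (hlam' f hf)
      rw [Tm.lam.injEq] at e3
      have key := hF' f hf v hv
      rw [← e3.1, ← e3.2] at key
      rw [ihF f hf v hv key]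

theorem sem_spec {M : Tm} (h : ∃ D, BigStep M D) : BigStep M (sem M) := by
  unfold sem
  rw [dif_pos h]
  exact h.choose_spec

theorem sem_eq {M : Tm} {D : TDist} (h : BigStep M D) : sem M = D :=
  (sem_spec ⟨D, h⟩).det' h

/-- Weakening. -/
theorem Affine.mono {Γ : Finset ℕ} {M : Tm} (h : Affine Γ M) :
    ∀ {Δ : Finset ℕ}, Γ ⊆ Δ → Affine Δ M := by
  induction h with
  | var hx => intro Δ hs; exact .var (hs hx)
  | lam h ih => intro Δ hs; exact .lam (ih (Finset.insert_subset_insert _ hs))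
  | @app Γ Γ' M N hdisj h1 h2 ih1 ih2 =>
    intro Δ hs
    have hΓ : Γ ⊆ Δ := (Finset.union_subset_iff.mp hs).1
    have hΓ' : Γ' ⊆ Δ \ Γ := by
      intro a ha
      simp only [Finset.mem_sdiff]
      exact ⟨(Finset.union_subset_iff.mp hs).2 ha, fun hc => Finset.disjoint_left.mp hdisj hc ha⟩
    have : Δ = Γ ∪ (Δ \ Γ) := by
      ext a; simp only [Finset.mem_union, Finset.mem_sdiff]; tauto
    rw [this]
    exact .app (Finset.disjoint_sdiff) (ih1 (Finset.Subset.refl _)) (ih2 hΓ')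
  | choice h1 h2 ih1 ih2 => intro Δ hs; exact .choice (ih1 hs) (ih2 hs)
  | omega => intro Δ hs; exact .omega

theorem Tm.subst_eq_of_not_mem {Γ : Finset ℕ} {M : Tm} (h : Affine Γ M)
    {x : ℕ} (hx : x ∉ Γ) (V : Tm) : Tm.subst x V M = M := by
  induction h with
  | @var _ y hy =>
    have : y ≠ x := fun hc => hx (hc ▸ hy)
    simp [Tm.subst, this]
  | @lam _ y M h ih =>
    by_cases hyx : y = x
    · simp [Tm.subst, hyx]
    · have : x ∉ insert y ‹Finset ℕ› := by
        simp only [Finset.mem_insert]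
        push_neg
        exact ⟨fun hc => hyx hc.symm, hx⟩
      simp [Tm.subst, hyx, ih this]
  | app hdisj h1 h2 ih1 ih2 =>
    simp only [Finset.mem_union] at hx
    push_neg at hx
    simp [Tm.subst, ih1 hx.1, ih2 hx.2]
  | choice h1 h2 ih1 ih2 => simp [Tm.subst, ih1 hx, ih2 hx]
  | omega => simp [Tm.subst]

/-- Substitution preserves affinity. -/
theorem Affine.subst {Γ : Finset ℕ} {M : Tm} (h : Affine Γ M) {x : ℕ} {V : Tm}
    (hV : Affine ∅ V) : Affine (Γ \ {x}) (Tm.subst x V M) := by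
  induction h with
  | @var Γ y hy =>
    by_cases hyx : y = x
    · simpa [Tm.subst, hyx] using hV.mono (Finset.empty_subset _)
    · simp only [Tm.subst, hyx, if_false]
      exact .var (by simp [Finset.mem_sdiff, hy, hyx])
  | @lam Γ y M h ih =>
    by_cases hyx : y = x
    · simp only [Tm.subst, hyx, if_true]
      subst hyx
      apply Affine.lam
      have : insert y (Γ \ {y}) = insert y Γ := by
        ext a; simp only [Finset.mem_insert, Finset.mem_sdiff, Finset.mem_singleton]; tauto
      rw [this]; exact h
    · simp only [Tm.subst, hyx, if_false]
      apply Affine.lam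
      have heq : insert y Γ \ {x} = insert y (Γ \ {x}) := by
        ext a
        simp only [Finset.mem_insert, Finset.mem_sdiff, Finset.mem_singleton]
        constructor
        · rintro ⟨h1 | h1, h2⟩
          · exact Or.inl h1
          · exact Or.inr ⟨h1, h2⟩
        · rintro (rfl | ⟨h1, h2⟩)
          · exact ⟨Or.inl rfl, hyx⟩
          · exact ⟨Or.inr h1, h2⟩
      rw [← heq]; exact ih
  | @app Γ Δ M N hdisj h1 h2 ih1 ih2 =>
    have : (Γ ∪ Δ) \ {x} = (Γ \ {x}) ∪ (Δ \ {x}) := Finset.union_sdiff_distrib _ _ _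
    rw [this]
    exact .app (hdisj.mono (Finset.sdiff_subset) (Finset.sdiff_subset)) ih1 ih2
  | choice h1 h2 ih1 ih2 => exact .choice ih1 ih2
  | omega => exact .omega

/-- Weight measure with `max` on choices. -/
def Tm.w : Tm → ℕ
  | .var _ => 1
  | .lam _ M => Tm.w M + 1
  | .app M N => Tm.w M + Tm.w N + 1
  | .choice M N => max (Tm.w M) (Tm.w N) + 1
  | .omega => 1

theorem Tm.w_pos (M : Tm) : 1 ≤ M.w := by cases M <;> simp [Tm.w]

theorem Tm.subst_w {Γ : Finset ℕ} {M : Tm} (h : Affine Γ M) (x : ℕ) (V : Tm) :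
    (Tm.subst x V M).w ≤ M.w + V.w := by
  induction h with
  | @var _ y hy =>
    by_cases hyx : y = x <;> simp [Tm.subst, hyx, Tm.w] <;> omega
  | @lam _ y M h ih =>
    by_cases hyx : y = x <;> simp [Tm.subst, hyx, Tm.w] <;> omega
  | @app Γ Δ M N hdisj h1 h2 ih1 ih2 =>
    by_cases hxΓ : x ∈ Γ
    · have hxΔ : x ∉ Δ := fun hc => Finset.disjoint_left.mp hdisj hxΓ hc
      rw [show Tm.subst x V (.app M N) = .app (Tm.subst x V M) N by
        simp [Tm.subst, Tm.subst_eq_of_not_mem h2 hxΔ]]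
      simp only [Tm.w]; omega
    · rw [show Tm.subst x V (.app M N) = .app M (Tm.subst x V N) by
        simp [Tm.subst, Tm.subst_eq_of_not_mem h1 hxΓ]]
      simp only [Tm.w]; omega
  | choice h1 h2 ih1 ih2 =>
    simp only [Tm.subst, Tm.w] at *
    omega
  | omega => simp [Tm.subst, Tm.w]

def Tm.bvf : Tm → ℕ
  | .lam x _ => x
  | _ => 0

def Tm.bdf : Tm → Tm
  | .lam _ L => L
  | _ => .omega


theorem affine_var_inv {Γ : Finset ℕ} {y : ℕ} (h : Affine Γ (.var y)) : y ∈ Γ := by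
  cases h; assumption

theorem affine_lam_inv {Γ : Finset ℕ} {y : ℕ} {L : Tm} (h : Affine Γ (.lam y L)) :
    Affine (insert y Γ) L := by
  cases h; assumption

theorem affine_choice_inv {Γ : Finset ℕ} {P Q : Tm} (h : Affine Γ (.choice P Q)) :
    Affine Γ P ∧ Affine Γ Q := by
  cases h; constructor <;> assumption

theorem affine_app_inv {Γ : Finset ℕ} {P Q : Tm} (h : Affine Γ (.app P Q)) :
    ∃ Γ₁ Γ₂, Γ = Γ₁ ∪ Γ₂ ∧ Disjoint Γ₁ Γ₂ ∧ Affine Γ₁ P ∧ Affine Γ₂ Q := by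
  cases h with
  | app hd h1 h2 => exact ⟨_, _, rfl, hd, h1, h2⟩

/-- Main existence lemma, by strong induction on weight. -/
theorem bigstep_exists_aux : ∀ n : ℕ, ∀ M : Tm, M.w ≤ n → Affine ∅ M →
    ∃ D : TDist, BigStep M D ∧
      ∀ V ∈ D.support, (∃ y L, V = Tm.lam y L) ∧ Affine ∅ V ∧ V.w ≤ M.w := by
  intro n
  induction n with
  | zero => intro M hw; exact absurd (le_trans (M.w_pos) hw) (by omega)
  | succ n ih =>
    intro M hw hA
    cases M with
    | var y => simpa using affine_var_inv hA
    | omega => exact ⟨0, .omega, by simp⟩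
    | lam y L =>
      refine ⟨Finsupp.single (.lam y L) 1, .val, ?_⟩
      intro V hV
      rw [Finsupp.support_single_ne_zero _ (one_ne_zero)] at hV
      simp only [Finset.mem_singleton] at hV
      subst hV
      exact ⟨⟨y, L, rfl⟩, hA, le_refl _⟩
    | choice P Q =>
      obtain ⟨hP, hQ⟩ := affine_choice_inv hA
      have hwP : P.w ≤ n := by have := Tm.w_pos Q; simp [Tm.w] at hw; omega
      have hwQ : Q.w ≤ n := by have := Tm.w_pos P; simp [Tm.w] at hw; omega
      obtain ⟨D, hD, hDs⟩ := ih P hwP hP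
      obtain ⟨E, hE, hEs⟩ := ih Q hwQ hQ
      refine ⟨_, .choice hD hE, ?_⟩
      intro V hV
      have : V ∈ D.support ∪ E.support := by
        apply Finset.mem_of_subset _ hV
        refine (Finsupp.support_add).trans ?_
        exact Finset.union_subset_union (Finsupp.support_smul) (Finsupp.support_smul)
      rcases Finset.mem_union.mp this with h | h
      · obtain ⟨hv1, hv2, hv3⟩ := hDs V h
        exact ⟨hv1, hv2, le_trans hv3 (by simp [Tm.w]; omega)⟩
      · obtain ⟨hv1, hv2, hv3⟩ := hEs V h
        exact ⟨hv1, hv2, le_trans hv3 (by simp [Tm.w]; omega)⟩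
    | app P Q =>
      obtain ⟨Γ₁, Γ₂, heq, hdisj, hP', hQ'⟩ := affine_app_inv hA
      obtain ⟨h1, h2⟩ := Finset.union_eq_empty.mp heq.symm
      subst h1; subst h2
      have hwP : P.w ≤ n := by have := Tm.w_pos Q; simp [Tm.w] at hw; omega
      have hwQ : Q.w ≤ n := by have := Tm.w_pos P; simp [Tm.w] at hw; omega
      obtain ⟨D, hD, hDs⟩ := ih P hwP hP'
      obtain ⟨E, hE, hEs⟩ := ih Q hwQ hQ'
      -- each f in D.support is a lambda
      have hlam : ∀ f ∈ D.support, f = Tm.lam f.bvf f.bdf := by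
        intro f hf
        obtain ⟨⟨y, L, rfl⟩, _, _⟩ := hDs f hf
        simp [Tm.bvf, Tm.bdf]
      -- evaluation of the substituted bodies
      have hsub : ∀ f ∈ D.support, ∀ v ∈ E.support,
          ∃ G : TDist, BigStep (Tm.subst f.bvf v f.bdf) G ∧
            ∀ V ∈ G.support, (∃ y L, V = Tm.lam y L) ∧ Affine ∅ V ∧
              V.w ≤ (Tm.subst f.bvf v f.bdf).w := by
        intro f hf v hv
        obtain ⟨⟨y, L, rfl⟩, hfA, hfw⟩ := hDs f hf
        obtain ⟨_, hvA, hvw⟩ := hEs v hv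
        simp only [Tm.bvf, Tm.bdf]
        have hLA : Affine {y} L := by simpa using affine_lam_inv hfA
        have hSA : Affine ∅ (Tm.subst y v L) := by
          simpa using hLA.subst (x := y) hvA
        have hSw : (Tm.subst y v L).w ≤ n := by
          have h1 := Tm.subst_w hLA y v
          simp [Tm.w] at hfw hw
          omega
        exact ih _ hSw hSA
      refine ⟨_, BigStep.app (F := fun f v => sem (Tm.subst f.bvf v f.bdf))
        (bv := Tm.bvf) (bd := Tm.bdf) hD hE hlam ?_, ?_⟩
      · intro f hf v hv
        obtain ⟨G, hG, _⟩ := hsub f hf v hv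
        exact sem_spec ⟨G, hG⟩
      · intro V hV
        have := Finset.mem_of_subset (Finsupp.support_sum) hV
        obtain ⟨f, hf, hV2⟩ := Finset.mem_biUnion.mp this
        have := Finset.mem_of_subset (Finsupp.support_sum) hV2
        obtain ⟨v, hv, hV3⟩ := Finset.mem_biUnion.mp this
        have hV4 : V ∈ (sem (Tm.subst f.bvf v f.bdf)).support :=
          Finset.mem_of_subset (Finsupp.support_smul) hV3
        obtain ⟨G, hG, hGs⟩ := hsub f hf v hv
        have hsemG : sem (Tm.subst f.bvf v f.bdf) = G := sem_eq hG
        rw [hsemG] at hV4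
        obtain ⟨hv1, hv2, hv3⟩ := hGs V hV4
        refine ⟨hv1, hv2, le_trans hv3 ?_⟩
        -- weight bound
        obtain ⟨⟨y, L, rfl⟩, hfA, hfw⟩ := hDs f hf
        obtain ⟨_, hvA, hvw⟩ := hEs v hv
        have hLA : Affine {y} L := by simpa using affine_lam_inv hfA
        have h1 := Tm.subst_w hLA y v
        simp only [Tm.bvf, Tm.bdf, Tm.w] at *
        omega

/-- every program has exactly one big-step semantics
(a finitely supported value subdistribution, by the type `Tm →₀ ℝ`). -/
theorem bigstep_exists_unique (M : Tm) (hM : Affine ∅ M) :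
    ∃! D : TDist, BigStep M D := by
  obtain ⟨D, hD, -⟩ := bigstep_exists_aux M.w M (le_refl _) hM
  exact ⟨D, hD, fun E hE => hE.det' hD⟩

end
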